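/- Let Q₁ = (c₁, u − a₁) and Q₂ = (c₂, u − a₂) be two candidate points below the Utopia point U = (c_U, u) in the plane, with a₁, a₂ > 0 their performance distances to the maximum performance u, and suppose their DTOs to U are equal: r₁ = dist(Q₁,U) = dist(Q₂,U) = r₂. Let O = (c_U, u + b) with b > 0 be a shifted ideal point vertically above U. If a₁ > a₂ (Q₁ has worse performance), then dist(Q₁,O) > dist(Q₂,O). -/
import Mathlib


/-- Euclidean distance between two points of the plane `ℝ × ℝ`. -/
noncomputable def euclidDist (p q : ℝ × ℝ) : ℝ :=
  Real.sqrt ((p.1 - q.1) ^ 2 + (p.2 - q.2) ^ 2)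

theorem shifted_ideal_point_prefers_better_performance
    (c₁ c₂ cU u a₁ a₂ b : ℝ) (ha₁ : 0 < a₁) (ha₂ : 0 < a₂) (hb : 0 < b)
    (hr : euclidDist (c₁, u - a₁) (cU, u) = euclidDist (c₂, u - a₂) (cU, u))
    (ha : a₂ < a₁) :
    euclidDist (c₂, u - a₂) (cU, u + b) < euclidDist (c₁, u - a₁) (cU, u + b) := by
  unfold euclidDist at *
  simp only at *
  have h1 : (c₁ - cU) ^ 2 + (u - a₁ - u) ^ 2 = (c₂ - cU) ^ 2 + (u - a₂ - u) ^ 2 := by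
    have := congrArg (· ^ 2) hr
    simpa [Real.sq_sqrt, add_nonneg, sq_nonneg] using this
  apply Real.sqrt_lt_sqrt (by positivity)
  nlinarith [sq_nonneg (c₁ - cU), sq_nonneg (c₂ - cU)]
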